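/- Let φ be a real-valued measurable function on ℝ with |φ(x)| ≤ M⟨x⟩^{−δ} for some M > 0 and δ > 5/2, and assume ∫_ℝ φ(x) dx ≠ 0. Then there exist λ₀ ∈ (0, 1) and C > 0, both depending only on φ (in particular independent of α), such that for every α > 0 and every 0 < λ < λ₀ one has 1 + α F^±(λ²) ≠ 0 and, for k ∈ {0, 1}: |d^k/dλ^k [ α / (λ (1 + α F^±(λ²))) ]| ≤ C λ^{−k}. -/

import Mathlib

/-!
Put `G(s) = ∫∫ e^{iσs|x-y|} φ(x) φ(y) dx dy`. Then `2λ(1 + αF^σ(λ²)) = D(λ) := 2λ + iασ G(λ)`,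
the function `G` has `G(0) = (∫ φ)² =: a > 0` and is Lipschitz with constant
`B = ∫∫ |x-y| |φ(x)| |φ(y)|` (finite because `δ > 2`), and the symbol is `2α / D(λ)`.
For `Bλ ≤ a/2` we get `Re G(λ) ≥ a/2`, hence `|D(λ)| ≥ |Im D(λ)| ≥ αa/2`, which bounds the symbol
uniformly in `α`. Its derivative is `-2αD'/D²` with `|D'| ≤ 2 + αB`. If `αB ≤ 1`, then
`Re D(λ) = 2λ - ασ Im G(λ) ≥ λ`, so `|D|² ≥ λ·αa/2` and the derivative is `O(1/(aλ))`;
if `αB > 1`, then `|D|² ≥ (αa/2)²` already gives `O(B/a²)`.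
-/

open MeasureTheory Set

/-- `F^±(λ²) = ⟨R₀^±(λ²)φ, φ⟩` for the one-dimensional free resolvent, whose kernel is
`(±i/(2λ)) e^{±iλ|x−y|}`; the sign `±` is encoded by `σ ∈ {1, -1}`. -/
noncomputable def resolventFormD1 (σ : ℝ) (φ : ℝ → ℝ) (l : ℝ) : ℂ :=
  ∫ x : ℝ, ∫ y : ℝ,
    ((σ : ℂ) * Complex.I / (2 * (l : ℂ))) *
      Complex.exp ((σ : ℂ) * Complex.I * (l : ℂ) * ((|x - y| : ℝ) : ℂ)) *
      (φ y : ℂ) * (φ x : ℂ)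

open Complex

section Decay

variable {φ : ℝ → ℝ} {M δ : ℝ}

lemma one_add_abs_le_two_mul_sqrt (x : ℝ) : 1 + |x| ≤ 2 * √(1 + x ^ 2) := by
  have h1 : 1 ≤ √(1 + x ^ 2) := Real.one_le_sqrt.2 (by nlinarith)
  have h2 : |x| ≤ √(1 + x ^ 2) := by
    rw [← Real.sqrt_sq_eq_abs]; exact Real.sqrt_le_sqrt (by linarith)
  linarith

lemma integrable_one_add_abs_mul_of_abs_le (hφ : AEStronglyMeasurable φ) (hδ : 2 < δ)
    (hdecay : ∀ x, |φ x| ≤ M * √(1 + x ^ 2) ^ (-δ)) :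
    Integrable (fun x => (1 + |x|) * φ x) := by
  have hbound : Integrable (fun x : ℝ => 2 * M * ((1 : ℝ) + ‖x‖ ^ 2) ^ (-(δ - 1) / 2)) :=
    (integrable_rpow_neg_one_add_norm_sq (by simp; linarith)).const_mul _
  refine hbound.mono' ((by fun_prop : Continuous fun x : ℝ => 1 + |x|).aestronglyMeasurable.mul hφ)
    (.of_forall fun x => ?_)
  have hpos : 0 < √(1 + x ^ 2) := by positivity
  have hrpow : ((1 : ℝ) + ‖x‖ ^ 2) ^ (-(δ - 1) / 2) = √(1 + x ^ 2) * √(1 + x ^ 2) ^ (-δ) := by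
    rw [Real.norm_eq_abs, sq_abs, Real.sqrt_eq_rpow, ← Real.rpow_mul (by positivity),
      ← Real.rpow_add (by positivity)]
    ring_nf
  rw [norm_mul, Real.norm_eq_abs, Real.norm_eq_abs, abs_of_nonneg (by positivity), hrpow]
  calc (1 + |x|) * |φ x| ≤ (2 * √(1 + x ^ 2)) * (M * √(1 + x ^ 2) ^ (-δ)) :=
        mul_le_mul (one_add_abs_le_two_mul_sqrt x) (hdecay x) (abs_nonneg _) (by positivity)
    _ = _ := by ring

lemma MeasureTheory.Integrable.of_one_add_abs_mul (hw : Integrable (fun x => (1 + |x|) * φ x))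
    (hφ : AEStronglyMeasurable φ) : Integrable φ :=
  hw.norm.mono' hφ (.of_forall fun x => by
    rw [Real.norm_eq_abs, Real.norm_eq_abs, abs_mul, abs_of_nonneg (by positivity : 0 ≤ 1 + |x|)]
    nlinarith [abs_nonneg (φ x), abs_nonneg x])

lemma integrable_abs_sub_mul_abs_mul_abs (hw : Integrable (fun x => (1 + |x|) * φ x))
    (hφ : Measurable φ) :
    Integrable (fun p : ℝ × ℝ => |p.1 - p.2| * (|φ p.1| * |φ p.2|)) (volume.prod volume) := by
  refine (hw.norm.mul_prod hw.norm).mono' (by fun_prop) (.of_forall fun p => ?_)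
  have hdist : |p.1 - p.2| ≤ (1 + |p.1|) * (1 + |p.2|) := by
    nlinarith [abs_sub p.1 p.2, abs_nonneg p.1, abs_nonneg p.2]
  simp only [norm_mul, Real.norm_eq_abs, abs_abs, abs_of_nonneg (by positivity : 0 ≤ 1 + |p.1|),
    abs_of_nonneg (by positivity : 0 ≤ 1 + |p.2|)]
  calc |p.1 - p.2| * (|φ p.1| * |φ p.2|) ≤ (1 + |p.1|) * (1 + |p.2|) * (|φ p.1| * |φ p.2|) := by
        gcongr
    _ = _ := by ring

end Decay

section PhaseIntegral

variable (σ : ℝ) (φ : ℝ → ℝ)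

/-- The integrand of `resolventFormD1` without the singular prefactor `σ i / (2 s)`. -/
noncomputable def phaseKernel (s : ℝ) (p : ℝ × ℝ) : ℂ :=
  cexp (σ * I * s * (|p.1 - p.2| : ℝ)) * ((φ p.1 : ℂ) * (φ p.2 : ℂ))

noncomputable def phaseIntegral (s : ℝ) : ℂ :=
  ∫ p, phaseKernel σ φ s p ∂(volume.prod volume)

variable {σ φ}

lemma norm_phaseKernel (s : ℝ) (p : ℝ × ℝ) : ‖phaseKernel σ φ s p‖ = |φ p.1| * |φ p.2| := by
  have harg : (σ : ℂ) * I * s * (|p.1 - p.2| : ℝ) = (σ * s * |p.1 - p.2| : ℝ) * I := by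
    push_cast; ring
  rw [phaseKernel, harg, norm_mul, norm_exp_ofReal_mul_I, one_mul, norm_mul, norm_real,
    norm_real, Real.norm_eq_abs, Real.norm_eq_abs]

lemma measurable_phaseKernel (hφ : Measurable φ) (s : ℝ) : Measurable (phaseKernel σ φ s) := by
  unfold phaseKernel; fun_prop

lemma integrable_phaseKernel (hφ : Measurable φ) (hint : Integrable φ) (s : ℝ) :
    Integrable (phaseKernel σ φ s) (volume.prod volume) :=
  (hint.norm.mul_prod hint.norm).mono' (measurable_phaseKernel hφ s).aestronglyMeasurable
    (.of_forall fun p => by rw [norm_phaseKernel]; rfl)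

lemma hasDerivAt_phaseKernel (s : ℝ) (p : ℝ × ℝ) :
    HasDerivAt (phaseKernel σ φ · p) (σ * I * (|p.1 - p.2| : ℝ) * phaseKernel σ φ s p) s := by
  have hlin : HasDerivAt (fun t : ℝ => (σ : ℂ) * I * t * (|p.1 - p.2| : ℝ))
      (σ * I * (|p.1 - p.2| : ℝ)) s := by
    simpa using ((hasDerivAt_id s).ofReal_comp.const_mul ((σ : ℂ) * I)).mul_const
      ((|p.1 - p.2| : ℝ) : ℂ)
  refine (hlin.cexp.mul_const ((φ p.1 : ℂ) * (φ p.2 : ℂ))).congr_deriv ?_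
  unfold phaseKernel; ring

lemma resolventFormD1_eq_mul_phaseIntegral (hφ : Measurable φ) (hint : Integrable φ) (s : ℝ) :
    resolventFormD1 σ φ s = σ * I / (2 * s) * phaseIntegral σ φ s := by
  rw [phaseIntegral, ← integral_integral (f := fun x y => phaseKernel σ φ s (x, y))
    (integrable_phaseKernel hφ hint s), resolventFormD1,
    ← integral_const_mul]
  refine integral_congr_ae (.of_forall fun x => ?_)
  simp only [← integral_const_mul, phaseKernel]
  refine integral_congr_ae (.of_forall fun y => ?_)
  simp only
  ring

lemma phaseIntegral_zero : phaseIntegral σ φ 0 = ((∫ x, φ x) ^ 2 : ℝ) := by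
  simp only [phaseIntegral, phaseKernel, ofReal_zero, mul_zero, zero_mul, exp_zero, one_mul]
  rw [integral_prod_mul (fun x : ℝ => (φ x : ℂ)) (fun y : ℝ => (φ y : ℂ)), integral_complex_ofReal]
  push_cast
  ring

lemma norm_mul_phaseKernel (s : ℝ) (p : ℝ × ℝ) :
    ‖σ * I * (|p.1 - p.2| : ℝ) * phaseKernel σ φ s p‖ =
      |σ| * (|p.1 - p.2| * (|φ p.1| * |φ p.2|)) := by
  rw [norm_mul, norm_mul, norm_mul, norm_real, norm_real, norm_I, norm_phaseKernel,
    Real.norm_eq_abs, Real.norm_eq_abs, abs_abs]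
  ring

lemma hasDerivAt_phaseIntegral (hφ : Measurable φ) (hw : Integrable (fun x => (1 + |x|) * φ x))
    (t : ℝ) :
    HasDerivAt (phaseIntegral σ φ)
      (∫ p, σ * I * (|p.1 - p.2| : ℝ) * phaseKernel σ φ t p ∂(volume.prod volume)) t :=
  (hasDerivAt_integral_of_dominated_loc_of_deriv_le Filter.univ_mem
    (.of_forall fun s => (measurable_phaseKernel hφ s).aestronglyMeasurable)
    (integrable_phaseKernel hφ (hw.of_one_add_abs_mul hφ.aestronglyMeasurable) t)
    (by unfold phaseKernel; fun_prop)
    (.of_forall fun p s _ => (norm_mul_phaseKernel s p).le)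
    ((integrable_abs_sub_mul_abs_mul_abs hw hφ).const_mul |σ|)
    (.of_forall fun p s _ => hasDerivAt_phaseKernel s p)).2

lemma norm_deriv_phaseIntegral_le (hφ : Measurable φ)
    (hw : Integrable (fun x => (1 + |x|) * φ x)) (t : ℝ) :
    ‖deriv (phaseIntegral σ φ) t‖ ≤
      |σ| * ∫ p, |p.1 - p.2| * (|φ p.1| * |φ p.2|) ∂(volume.prod volume) := by
  rw [(hasDerivAt_phaseIntegral hφ hw t).deriv, ← integral_const_mul]
  exact norm_integral_le_of_norm_le ((integrable_abs_sub_mul_abs_mul_abs hw hφ).const_mul |σ|)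
    (.of_forall fun p => (norm_mul_phaseKernel t p).le)

end PhaseIntegral

section RankOneSymbol

/-- `2s(1 + αF^σ(s))` in terms of `G = phaseIntegral σ φ` (see
`mul_one_add_mul_resolventFormD1`); unlike `F^σ` it stays smooth at `s = 0`. -/
noncomputable def rankOneDenom (α σ : ℝ) (G : ℝ → ℂ) (s : ℝ) : ℂ :=
  2 * s + α * σ * I * G s

lemma mul_one_add_mul_resolventFormD1 {σ : ℝ} {φ : ℝ → ℝ} (hφ : Measurable φ)
    (hint : Integrable φ) (α : ℝ) {s : ℝ} (hs : s ≠ 0) :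
    (s : ℂ) * (1 + α * resolventFormD1 σ φ s) = rankOneDenom α σ (phaseIntegral σ φ) s / 2 := by
  have hs' : (s : ℂ) ≠ 0 := ofReal_ne_zero.2 hs
  rw [resolventFormD1_eq_mul_phaseIntegral hφ hint, rankOneDenom]
  field_simp

variable {G : ℝ → ℂ} {a B α σ l : ℝ}

lemma mul_div_two_le_norm_rankOneDenom (hσ : |σ| = 1) (hα : 0 ≤ α)
    (hG : ‖G l - a‖ ≤ a / 2) : α * a / 2 ≤ ‖rankOneDenom α σ G l‖ := by
  have hre : a / 2 ≤ (G l).re := by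
    have h := abs_re_le_norm (G l - a)
    rw [sub_re, ofReal_re] at h
    linarith [neg_abs_le ((G l).re - a)]
  calc α * a / 2 ≤ |α * σ * (G l).re| := by
        rw [abs_mul, abs_mul, hσ, abs_of_nonneg hα, mul_one]
        nlinarith [le_abs_self (G l).re]
    _ = |(rankOneDenom α σ G l).im| := by simp [rankOneDenom]
    _ ≤ _ := abs_im_le_norm _

lemma le_norm_rankOneDenom (hσ : |σ| = 1) (hα : 0 ≤ α) (hl : 0 ≤ l)
    (hG : ‖G l - a‖ ≤ B * l) (hαB : α * B ≤ 1) : l ≤ ‖rankOneDenom α σ G l‖ := by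
  have him : |(G l).im| ≤ B * l := by
    simpa using (abs_im_le_norm (G l - a)).trans hG
  have hsmall : |α * σ * (G l).im| ≤ l := by
    rw [abs_mul, abs_mul, hσ, abs_of_nonneg hα, mul_one]
    nlinarith [abs_nonneg (G l).im]
  calc l ≤ (rankOneDenom α σ G l).re := by
        simp only [rankOneDenom, add_re, mul_re, ofReal_re, ofReal_im, I_re, I_im]
        norm_num
        linarith [le_abs_self (α * σ * (G l).im)]
    _ ≤ _ := re_le_norm _

lemma hasDerivAt_rankOneDenom (hG : DifferentiableAt ℝ G l) :
    HasDerivAt (rankOneDenom α σ G) (2 + α * σ * I * deriv G l) l :=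
  (((hasDerivAt_id l).ofReal_comp.const_mul 2).add
    (hG.hasDerivAt.const_mul ((α : ℂ) * σ * I))).congr_deriv (by simp)

lemma norm_deriv_rankOneDenom_le (hG : DifferentiableAt ℝ G l) (hσ : |σ| = 1) (hα : 0 ≤ α)
    (hG' : ‖deriv G l‖ ≤ B) : ‖deriv (rankOneDenom α σ G) l‖ ≤ 2 + α * B :=
  calc ‖deriv (rankOneDenom α σ G) l‖ ≤ ‖(2 : ℂ)‖ + ‖α * σ * I * deriv G l‖ := by
        rw [(hasDerivAt_rankOneDenom hG).deriv]; exact norm_add_le _ _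
    _ = 2 + α * ‖deriv G l‖ := by
        rw [norm_mul, norm_mul, norm_mul, norm_real, norm_real, norm_I, Real.norm_eq_abs,
          Real.norm_eq_abs, hσ, abs_of_nonneg hα]
        norm_num
    _ ≤ 2 + α * B := by gcongr

lemma norm_deriv_const_div_le {D : ℝ → ℂ} (hD : DifferentiableAt ℝ D l) (hα : 0 < α)
    (ha : 0 < a) (hB : 0 ≤ B) (hl : 0 < l) (hl1 : l ≤ 1) (hlow : α * a / 2 ≤ ‖D l‖)
    (hsmall : α * B ≤ 1 → l ≤ ‖D l‖) (hD' : ‖deriv D l‖ ≤ 2 + α * B) :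
    ‖deriv (fun s => 2 * α / D s) l‖ ≤ (12 / a + 24 * B / a ^ 2) * l⁻¹ := by
  set d := ‖D l‖
  have hd : 0 < d := (by positivity : 0 < α * a / 2).trans_le hlow
  rw [((hasDerivAt_const l (2 * (α : ℂ))).fun_div hD.hasDerivAt (norm_pos_iff.1 hd)).deriv,
    zero_mul, zero_sub, norm_div, norm_neg, norm_pow, norm_mul, norm_mul, norm_real,
    Real.norm_eq_abs, abs_of_pos hα, Complex.norm_two]
  rcases le_or_gt (α * B) 1 with hαB | hαB
  · have hdl : l * (α * a / 2) ≤ d ^ 2 := by nlinarith [hsmall hαB]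
    calc 2 * α * ‖deriv D l‖ / d ^ 2 ≤ 2 * α * 3 / (l * (α * a / 2)) := by
          gcongr; linarith
      _ = 12 / a * l⁻¹ := by field_simp; ring
      _ ≤ (12 / a + 24 * B / a ^ 2) * l⁻¹ := by
          gcongr; linarith [(by positivity : 0 ≤ 24 * B / a ^ 2)]
  · have hB0 : 0 < B := pos_of_mul_pos_right (by linarith) hα.le
    calc 2 * α * ‖deriv D l‖ / d ^ 2 ≤ 2 * α * (3 * α * B) / (α * a / 2) ^ 2 := by
          gcongr; linarith
      _ = 24 * B / a ^ 2 := by field_simp; ring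
      _ ≤ 24 * B / a ^ 2 * l⁻¹ :=
          le_mul_of_one_le_right (by positivity) ((one_le_inv₀ hl).2 hl1)
      _ ≤ (12 / a + 24 * B / a ^ 2) * l⁻¹ := by gcongr; linarith [(by positivity : 0 ≤ 12 / a)]

lemma rankOneDenom_bounds (hG : Differentiable ℝ G)
    (hG' : ∀ t, ‖deriv G t‖ ≤ B) (hG0 : G 0 = a) (ha : 0 < a) (hσ : |σ| = 1) (hα : 0 < α)
    (hl : 0 < l) (hl1 : l ≤ 1) (hBl : B * l ≤ a / 2) :
    rankOneDenom α σ G l ≠ 0 ∧ ‖2 * α / rankOneDenom α σ G l‖ ≤ 12 / a + 24 * B / a ^ 2 ∧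
      ‖deriv (fun s => 2 * α / rankOneDenom α σ G s) l‖ ≤ (12 / a + 24 * B / a ^ 2) * l⁻¹ := by
  have hB : 0 ≤ B := (norm_nonneg _).trans (hG' 0)
  have hGl : ‖G l - a‖ ≤ B * l := by
    simpa [hG0, abs_of_pos hl] using convex_univ.norm_image_sub_le_of_norm_deriv_le
      (fun x _ => hG x) (fun x _ => hG' x) (mem_univ 0) (mem_univ l)
  have hlow := mul_div_two_le_norm_rankOneDenom hσ hα.le (hGl.trans hBl)
  have hD : 0 < ‖rankOneDenom α σ G l‖ := (by positivity : 0 < α * a / 2).trans_le hlow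
  refine ⟨norm_pos_iff.1 hD, ?_,
    norm_deriv_const_div_le (hasDerivAt_rankOneDenom (hG l)).differentiableAt hα ha hB hl hl1 hlow
      (le_norm_rankOneDenom hσ hα.le hl.le hGl)
      (norm_deriv_rankOneDenom_le (hG l) hσ hα.le (hG' l))⟩
  calc ‖2 * α / rankOneDenom α σ G l‖ = 2 * α / ‖rankOneDenom α σ G l‖ := by
        rw [norm_div, norm_mul, norm_real, Complex.norm_two, Real.norm_eq_abs, abs_of_pos hα]
    _ ≤ 2 * α / (α * a / 2) := by gcongr
    _ = 4 / a := by field_simp; ring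
    _ ≤ 12 / a + 24 * B / a ^ 2 := by
        have : 4 / a ≤ 12 / a := by gcongr; norm_num
        linarith [(by positivity : 0 ≤ 24 * B / a ^ 2)]

end RankOneSymbol

theorem rank_one_symbol_gain_d1_general (φ : ℝ → ℝ) (M δ : ℝ) (hφ : Measurable φ)
    (hδ : 5/2 < δ)
    (hdecay : ∀ x : ℝ, |φ x| ≤ M * Real.sqrt (1 + x ^ 2) ^ (-δ))
    (hmean : (∫ x : ℝ, φ x) ≠ 0) :
    ∃ lam₀ ∈ Ioo (0:ℝ) 1, ∃ C > 0, ∀ α : ℝ, 0 < α →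
      ∀ σ : ℝ, (σ = 1 ∨ σ = -1) → ∀ l ∈ Ioo (0:ℝ) lam₀,
        1 + (α : ℂ) * resolventFormD1 σ φ l ≠ 0 ∧
        ‖(α : ℂ) / ((l : ℂ) * (1 + (α : ℂ) * resolventFormD1 σ φ l))‖ ≤ C ∧
        ‖deriv (fun s : ℝ =>
            (α : ℂ) / ((s : ℂ) * (1 + (α : ℂ) * resolventFormD1 σ φ s))) l‖ ≤ C * l⁻¹ := by
  have hw := integrable_one_add_abs_mul_of_abs_le hφ.aestronglyMeasurable (by linarith) hdecay
  have hint := hw.of_one_add_abs_mul hφ.aestronglyMeasurable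
  set a := (∫ x, φ x) ^ 2
  set B := ∫ p, |p.1 - p.2| * (|φ p.1| * |φ p.2|) ∂(volume.prod volume)
  have ha : 0 < a := by positivity
  have hB : 0 ≤ B := integral_nonneg fun p => by positivity
  refine ⟨min (1 / 2) (a / (2 * B + 2)), ⟨by positivity, (min_le_left _ _).trans_lt (by norm_num)⟩,
    12 / a + 24 * B / a ^ 2, by positivity, fun α hα σ hσ l ⟨hl0, hl⟩ => ?_⟩
  have hσ1 : |σ| = 1 := by rcases hσ with rfl | rfl <;> norm_num
  have hBl : B * l ≤ a / 2 := by
    have := (lt_div_iff₀ (by positivity)).1 (hl.trans_le (min_le_right _ _))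
    nlinarith
  have hsymb : ∀ s ≠ 0, (α : ℂ) / (s * (1 + α * resolventFormD1 σ φ s)) =
      2 * α / rankOneDenom α σ (phaseIntegral σ φ) s := fun s hs => by
    rw [mul_one_add_mul_resolventFormD1 hφ hint α hs, div_div_eq_mul_div, mul_comm]
  obtain ⟨hne, hbd, hder⟩ := rankOneDenom_bounds
    (fun t => (hasDerivAt_phaseIntegral hφ hw t).differentiableAt)
    (fun t => by simpa [hσ1] using norm_deriv_phaseIntegral_le (σ := σ) hφ hw t)
    phaseIntegral_zero ha hσ1 hα hl0 (by linarith [min_le_left (1 / 2 : ℝ) (a / (2 * B + 2))]) hBl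
  refine ⟨fun h => hne ?_, hsymb l hl0.ne' ▸ hbd, ?_⟩
  · simpa [h] using (mul_one_add_mul_resolventFormD1 hφ hint α hl0.ne' (σ := σ)).symm
  · rwa [Filter.EventuallyEq.deriv_eq ((eventually_ne_nhds hl0.ne').mono hsymb)]

/-- Lemma 3.5 (iv) of the paper: the gain of `λ⁻¹` in the rank-one symbol
`α/(λ(1 + αF^±(λ²)))`, case `d = 1`, `∫ φ ≠ 0`. -/
theorem rank_one_symbol_gain_d1 (φ : ℝ → ℝ) (M δ : ℝ) (hφ : Measurable φ)
    (hM : 0 < M) (hδ : 5/2 < δ)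
    (hdecay : ∀ x : ℝ, |φ x| ≤ M * Real.sqrt (1 + x ^ 2) ^ (-δ))
    (hmean : (∫ x : ℝ, φ x) ≠ 0) :
    ∃ lam₀ ∈ Ioo (0:ℝ) 1, ∃ C > 0, ∀ α : ℝ, 0 < α →
      ∀ σ : ℝ, (σ = 1 ∨ σ = -1) → ∀ l ∈ Ioo (0:ℝ) lam₀,
        1 + (α : ℂ) * resolventFormD1 σ φ l ≠ 0 ∧
        ‖(α : ℂ) / ((l : ℂ) * (1 + (α : ℂ) * resolventFormD1 σ φ l))‖ ≤ C ∧
        ‖deriv (fun s : ℝ =>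
            (α : ℂ) / ((s : ℂ) * (1 + (α : ℂ) * resolventFormD1 σ φ s))) l‖ ≤ C * l⁻¹ :=
  rank_one_symbol_gain_d1_general φ M δ hφ hδ hdecay hmean
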